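/- For λ, μ with λ² + μ² ≠ 0, define operators on smooth compactly supported ψ : ℝ → ℂ by (A ψ)(θ) = (−(i/2) μν/(λ²+μ²) + (λ/(λ²+μ²)) ψ'(θ) − (i/2) μ (λ²+μ²) θ² ψ(θ)) and (B ψ)(θ) = ((i/2) λν/(λ²+μ²) ψ(θ) + (μ/(λ²+μ²)) ψ'(θ) + (i/2) λ (λ²+μ²) θ² ψ(θ)). Then (A² + B²)ψ(θ) = (1/(λ²+μ²)) ψ''(θ) − (ν + (λ²+μ²)² θ²)²/(4(λ²+μ²)) ψ(θ). -/

import Mathlib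

lemma deriv_comb (a b c : ℂ) (ψ : ℝ → ℂ) (hψ : ContDiff ℝ (⊤ : ℕ∞) ψ) (θ : ℝ) :
    deriv (fun x : ℝ => a * ψ x + b * deriv ψ x + c * (x:ℂ) ^ 2 * ψ x) θ =
      a * deriv ψ θ + b * deriv (deriv ψ) θ
        + c * (2 * (θ:ℂ) * ψ θ + (θ:ℂ) ^ 2 * deriv ψ θ) := by
  have hψd : HasDerivAt ψ (deriv ψ θ) θ := (hψ.differentiable (by simp) θ).hasDerivAt
  have hψ' := (contDiff_infty_iff_deriv.mp (hψ.of_le (by simp))).2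
  have hψ'd : HasDerivAt (deriv ψ) (deriv (deriv ψ) θ) θ :=
    (hψ'.differentiable (by simp) θ).hasDerivAt
  have hre : HasDerivAt (fun x : ℝ => (x:ℂ)) 1 θ := by
    simpa using (hasDerivAt_id θ).ofReal_comp
  have hsq : HasDerivAt (fun x : ℝ => (x:ℂ) ^ 2) (2 * (θ:ℂ)) θ := by
    have := hre.mul hre
    simp only [one_mul, mul_one] at this
    rw [show (fun x : ℝ => (x:ℂ) ^ 2) = (fun x : ℝ => (x:ℂ)) * (fun x : ℝ => (x:ℂ)) from by ext x; simp [sq]]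
    exact this.congr_deriv (two_mul _).symm
  have : HasDerivAt (fun x : ℝ => a * ψ x + b * deriv ψ x + c * (x:ℂ) ^ 2 * ψ x)
      (a * deriv ψ θ + b * deriv (deriv ψ) θ
        + c * (2 * (θ:ℂ) * ψ θ + (θ:ℂ) ^ 2 * deriv ψ θ)) θ := by
    have h3 : HasDerivAt (fun x : ℝ => c * (x:ℂ) ^ 2 * ψ x)
        (c * (2 * (θ:ℂ) * ψ θ + (θ:ℂ) ^ 2 * deriv ψ θ)) θ := by
      have := ((hsq.const_mul c).mul hψd)
      exact this.congr_deriv (by ring)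
    exact ((hψd.const_mul a).add (hψ'd.const_mul b)).add h3
  exact this.deriv

/-- The operator A = dX₁^{λ,μ,ν} on the Cartan group representation space. -/
noncomputable def Aop (l μ ν : ℝ) (ψ : ℝ → ℂ) : ℝ → ℂ := fun θ =>
  -(Complex.I / 2) * (↑μ * ↑ν / (↑l ^ 2 + ↑μ ^ 2)) * ψ θ
    + (↑l / (↑l ^ 2 + ↑μ ^ 2)) * deriv ψ θ
    - (Complex.I / 2) * ↑μ * (↑l ^ 2 + ↑μ ^ 2) * ↑θ ^ 2 * ψ θ

/-- The operator B = dX₂^{λ,μ,ν} on the Cartan group representation space. -/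
noncomputable def Bop (l μ ν : ℝ) (ψ : ℝ → ℂ) : ℝ → ℂ := fun θ =>
  (Complex.I / 2) * (↑l * ↑ν / (↑l ^ 2 + ↑μ ^ 2)) * ψ θ
    + (↑μ / (↑l ^ 2 + ↑μ ^ 2)) * deriv ψ θ
    + (Complex.I / 2) * ↑l * (↑l ^ 2 + ↑μ ^ 2) * ↑θ ^ 2 * ψ θ

set_option maxHeartbeats 2000000 in
theorem stmt17 (l μ ν : ℝ) (h : l ^ 2 + μ ^ 2 ≠ 0) (ψ : ℝ → ℂ)
    (hψ : ContDiff ℝ (⊤ : ℕ∞) ψ) (θ : ℝ) :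
    Aop l μ ν (Aop l μ ν ψ) θ + Bop l μ ν (Bop l μ ν ψ) θ =
      (1 / (↑l ^ 2 + ↑μ ^ 2) : ℂ) * deriv (deriv ψ) θ
        - ((↑ν + (↑l ^ 2 + ↑μ ^ 2) ^ 2 * ↑θ ^ 2) ^ 2 / (4 * (↑l ^ 2 + ↑μ ^ 2)) : ℂ) * ψ θ := by
  have hs : ((l : ℂ) ^ 2 + (μ : ℂ) ^ 2) ≠ 0 := by
    have : ((l ^ 2 + μ ^ 2 : ℝ) : ℂ) ≠ 0 := Complex.ofReal_ne_zero.mpr h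
    push_cast at this; exact this
  set a1 : ℂ := -(Complex.I / 2) * ((μ:ℂ) * ν / ((l:ℂ) ^ 2 + (μ:ℂ) ^ 2)) with ha1
  set b1 : ℂ := (l:ℂ) / ((l:ℂ) ^ 2 + (μ:ℂ) ^ 2) with hb1
  set c1 : ℂ := -(Complex.I / 2) * (μ:ℂ) * ((l:ℂ) ^ 2 + (μ:ℂ) ^ 2) with hc1
  set a2 : ℂ := (Complex.I / 2) * ((l:ℂ) * ν / ((l:ℂ) ^ 2 + (μ:ℂ) ^ 2)) with ha2
  set b2 : ℂ := (μ:ℂ) / ((l:ℂ) ^ 2 + (μ:ℂ) ^ 2) with hb2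
  set c2 : ℂ := (Complex.I / 2) * (l:ℂ) * ((l:ℂ) ^ 2 + (μ:ℂ) ^ 2) with hc2
  have hA : Aop l μ ν ψ = fun x : ℝ =>
      a1 * ψ x + b1 * deriv ψ x + c1 * (x:ℂ) ^ 2 * ψ x := by
    funext x; simp only [Aop, ha1, hb1, hc1]; ring
  have hB : Bop l μ ν ψ = fun x : ℝ =>
      a2 * ψ x + b2 * deriv ψ x + c2 * (x:ℂ) ^ 2 * ψ x := by
    funext x; simp only [Bop, ha2, hb2, hc2]
    try ring
  have hdA : deriv (Aop l μ ν ψ) θ = a1 * deriv ψ θ + b1 * deriv (deriv ψ) θ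
      + c1 * (2 * (θ:ℂ) * ψ θ + (θ:ℂ) ^ 2 * deriv ψ θ) := by
    rw [hA]; exact deriv_comb a1 b1 c1 ψ hψ θ
  have hdB : deriv (Bop l μ ν ψ) θ = a2 * deriv ψ θ + b2 * deriv (deriv ψ) θ
      + c2 * (2 * (θ:ℂ) * ψ θ + (θ:ℂ) ^ 2 * deriv ψ θ) := by
    rw [hB]; exact deriv_comb a2 b2 c2 ψ hψ θ
  have e1 : Aop l μ ν (Aop l μ ν ψ) θ =
      a1 * Aop l μ ν ψ θ + b1 * deriv (Aop l μ ν ψ) θ + c1 * (θ:ℂ) ^ 2 * Aop l μ ν ψ θ := by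
    simp only [Aop, ha1, hb1, hc1]; ring
  have e2 : Bop l μ ν (Bop l μ ν ψ) θ =
      a2 * Bop l μ ν ψ θ + b2 * deriv (Bop l μ ν ψ) θ + c2 * (θ:ℂ) ^ 2 * Bop l μ ν ψ θ := by
    simp only [Bop, ha2, hb2, hc2]
    try ring
  have vA : Aop l μ ν ψ θ = a1 * ψ θ + b1 * deriv ψ θ + c1 * (θ:ℂ) ^ 2 * ψ θ := by
    rw [hA]
  have vB : Bop l μ ν ψ θ = a2 * ψ θ + b2 * deriv ψ θ + c2 * (θ:ℂ) ^ 2 * ψ θ := by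
    rw [hB]
  rw [e1, e2, hdA, hdB, vA, vB, ha1, hb1, hc1, ha2, hb2, hc2]
  have hv : ((l:ℂ) ^ 2 + (μ:ℂ) ^ 2) * ((l:ℂ)^2+(μ:ℂ)^2)⁻¹ = 1 := mul_inv_cancel₀ hs
  have hI : Complex.I ^ 2 = -1 := Complex.I_sq
  simp only [div_eq_mul_inv, mul_inv]
  linear_combination ((((l:ℂ)^2+(μ:ℂ)^2)⁻¹)*(deriv (deriv ψ) θ) + (-1/4 : ℂ)*((ν:ℂ))^2*(((l:ℂ)^2+(μ:ℂ)^2)⁻¹)*(ψ θ) + (1/4 : ℂ)*((μ:ℂ))^6*((θ:ℂ))^4*(ψ θ) + (3/4 : ℂ)*((l:ℂ))^2*((μ:ℂ))^4*((θ:ℂ))^4*(ψ θ) + (3/4 : ℂ)*((l:ℂ))^4*((μ:ℂ))^2*((θ:ℂ))^4*(ψ θ) + (1/4 : ℂ)*((l:ℂ))^6*((θ:ℂ))^4*(ψ θ)) * hv + ((1/4 : ℂ)*((μ:ℂ))^2*((ν:ℂ))^2*(((l:ℂ)^2+(μ:ℂ)^2)⁻¹)^2*(ψ θ) + (1/2 :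 ℂ)*((μ:ℂ))^4*((ν:ℂ))*((θ:ℂ))^2*(((l:ℂ)^2+(μ:ℂ)^2)⁻¹)*(ψ θ) + (1/4 : ℂ)*((μ:ℂ))^6*((θ:ℂ))^4*(ψ θ) + (1/4 : ℂ)*((l:ℂ))^2*((ν:ℂ))^2*(((l:ℂ)^2+(μ:ℂ)^2)⁻¹)^2*(ψ θ) + ((l:ℂ))^2*((μ:ℂ))^2*((ν:ℂ))*((θ:ℂ))^2*(((l:ℂ)^2+(μ:ℂ)^2)⁻¹)*(ψ θ) + (3/4 : ℂ)*((l:ℂ))^2*((μ:ℂ))^4*((θ:ℂ))^4*(ψ θ) + (1/2 : ℂ)*((l:ℂ))^4*((ν:ℂ))*((θ:ℂ))^2*(((l:ℂ)^2+(μ:ℂ)^2)⁻¹)*(ψ θ) + (3/4 : ℂ)*((l:ℂ))^4*((μ:ℂ))^2*((θ:ℂ))^4*(ψ θ) + (1/4 : ℂ)*((l:ℂ))^6*((θ:ℂ))^4*(ψ θ)) * hI
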